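/- Let Q ⊂ ℝ² be a compact convex set of area A > 0 and fix w_max > 0, ρ > 0. Let p* = (p*₁, …, p*_m) ∈ Q^m be any minimizer of H_m(·, Q) (an m-median configuration), and let θ₁, …, θ_m ∈ ℝ be arbitrary headings. Then the coverage cost of the Median Stationing algorithm for DD robots, T_MS^DD = (1/A) ∫_Q min_{1≤i≤m} τ_DD((p*_i, θ_i), q) dq, satisfies H*_m(Q)/w_max ≤ T_MS^DD ≤ H*_m(Q)/w_max + π ρ / (2 w_max). -/

import Mathlib

open MeasureTheory Filter Topology Real

noncomputable section

/-- The plane `ℝ²` with the Euclidean norm. -/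
abbrev Plane : Type := EuclideanSpace ℝ (Fin 2)

/-- A differential-drive (DD) trajectory with wheel-speed bound `wmax` and half-axle
length `ρ`: coordinates `x y θ` driven by measurable wheel-speed controls `wl, wr`
bounded by `wmax`, satisfying (in integral form) `x' = (wl+wr)/2 ⬝ cos θ`,
`y' = (wl+wr)/2 ⬝ sin θ`, `θ' = (wr - wl)/(2ρ)`. -/
def IsDDTraj (wmax ρ : ℝ) (x y θ : ℝ → ℝ) : Prop :=
  ∃ wl wr : ℝ → ℝ, Measurable wl ∧ Measurable wr ∧
    (∀ t, |wl t| ≤ wmax) ∧ (∀ t, |wr t| ≤ wmax) ∧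
    (∀ t, x t = x 0 + ∫ s in (0:ℝ)..t, (wl s + wr s) / 2 * Real.cos (θ s)) ∧
    (∀ t, y t = y 0 + ∫ s in (0:ℝ)..t, (wl s + wr s) / 2 * Real.sin (θ s)) ∧
    (∀ t, θ t = θ 0 + ∫ s in (0:ℝ)..t, (wr s - wl s) / (2 * ρ))

/-- Minimum travel time of a DD robot from configuration `(p, θ₀)` to the point `q`. -/
def tauDD (wmax ρ : ℝ) (p : Plane) (θ₀ : ℝ) (q : Plane) : ℝ :=
  sInf {T : ℝ | 0 ≤ T ∧ ∃ x y θ : ℝ → ℝ, IsDDTraj wmax ρ x y θ ∧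
    x 0 = p 0 ∧ y 0 = p 1 ∧ θ 0 = θ₀ ∧ x T = q 0 ∧ y T = q 1}

/-- Reachable set at time `t` of a DD robot starting at configuration `(p, θ₀)`. -/
def reachDD (wmax ρ : ℝ) (p : Plane) (θ₀ : ℝ) (t : ℝ) : Set Plane :=
  {q | tauDD wmax ρ p θ₀ q ≤ t}

/-!
The midpoint of a DD robot moves at speed `|w_l + w_r| / 2 ≤ w_max`, so
`τ_DD((p, θ), q) ≥ ‖p - q‖ / w_max`. Conversely, the robot can turn on the spot by at most `π / 2`
until its axis lies along the line through `p` and `q` and then drive straight to `q`, forwards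
or backwards, so `τ_DD((p, θ), q) ≤ ‖p - q‖ / w_max + π ρ / (2 w_max)`. Both bounds survive the
minimum over the robots and the average over `Q`. That average makes sense because `τ_DD` is
upper semicontinuous in `q`: turning by a small angle `W`, driving, turning by `-2 W` and driving
again reaches every point near the end of a trajectory in arbitrarily little extra time.
-/

section Primitive

variable {f g F G : ℝ → ℝ} {T C : ℝ}

lemma intervalIntegrable_of_abs_le (hf : Measurable f) (hC : ∀ s, |f s| ≤ C) (a b : ℝ) :
    IntervalIntegrable f volume a b :=
  intervalIntegrable_iff.2 <| Measure.integrableOn_of_bounded measure_Ioc_lt_top.ne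
    hf.aestronglyMeasurable (Eventually.of_forall hC)

lemma continuous_of_eq_primitive (hf : Measurable f) (hC : ∀ s, |f s| ≤ C)
    (hF : ∀ t, F t = F 0 + ∫ s in (0:ℝ)..t, f s) : Continuous F :=
  (continuous_const.add (intervalIntegral.continuous_primitive
    (intervalIntegrable_of_abs_le hf hC) 0)).congr fun t => (hF t).symm

def glue (T : ℝ) (f g : ℝ → ℝ) (t : ℝ) : ℝ := if t ≤ T then f t else g (t - T)

lemma glue_of_le {t : ℝ} (ht : t ≤ T) : glue T f g t = f t := if_pos ht

lemma glue_of_lt {t : ℝ} (ht : T < t) : glue T f g t = g (t - T) := if_neg ht.not_ge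

lemma glue_of_ge {t : ℝ} (hfg : g 0 = f T) (ht : T ≤ t) : glue T f g t = g (t - T) := by
  rcases ht.lt_or_eq with ht | rfl
  · exact glue_of_lt ht
  · rw [glue_of_le le_rfl, sub_self, hfg]

lemma abs_glue_le (hf : ∀ s, |f s| ≤ C) (hg : ∀ s, |g s| ≤ C) (t : ℝ) : |glue T f g t| ≤ C := by
  unfold glue; split_ifs
  exacts [hf t, hg _]

lemma Measurable.glue (hf : Measurable f) (hg : Measurable g) : Measurable (glue T f g) :=
  Measurable.ite measurableSet_Iic hf (hg.comp (measurable_id.sub measurable_const))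

lemma glue_comp₃ {a₁ a₂ b₁ b₂ c₁ c₂ : ℝ → ℝ} (φ : ℝ → ℝ → ℝ → ℝ) :
    (fun s => φ (glue T a₁ a₂ s) (glue T b₁ b₂ s) (glue T c₁ c₂ s)) =
      glue T (fun s => φ (a₁ s) (b₁ s) (c₁ s)) (fun s => φ (a₂ s) (b₂ s) (c₂ s)) := by
  funext s; unfold glue; split_ifs <;> rfl

lemma glue_eq_primitive (hT : 0 ≤ T)
    (hint : ∀ a b, IntervalIntegrable (glue T f g) volume a b)
    (hF : ∀ t, F t = F 0 + ∫ s in (0:ℝ)..t, f s) (hG : ∀ t, G t = G 0 + ∫ s in (0:ℝ)..t, g s)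
    (hFG : G 0 = F T) (t : ℝ) :
    glue T F G t = F 0 + ∫ s in (0:ℝ)..t, glue T f g s := by
  have h_head : ∀ t ≤ T, ∫ s in (0:ℝ)..t, glue T f g s = ∫ s in (0:ℝ)..t, f s :=
    fun t ht => intervalIntegral.integral_congr fun s hs => glue_of_le (hs.2.trans (max_le hT ht))
  rcases le_or_gt t T with ht | ht
  · rw [glue_of_le ht, h_head t ht, ← hF t]
  have h_tail : ∫ s in T..t, glue T f g s = ∫ s in (0:ℝ)..(t - T), g s := by
    rw [← sub_self T, ← intervalIntegral.integral_comp_sub_right]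
    refine intervalIntegral.integral_congr_ae (Eventually.of_forall fun s hs => ?_)
    rw [Set.uIoc_of_le ht.le] at hs
    exact glue_of_lt hs.1
  rw [glue_of_lt ht, ← intervalIntegral.integral_add_adjacent_intervals (hint 0 T) (hint T t),
    h_head T le_rfl, h_tail, hG, hFG, hF T, add_assoc]

end Primitive

section Trajectory

variable {wmax ρ : ℝ}

lemma abs_half_add_le {a b : ℝ} (ha : |a| ≤ wmax) (hb : |b| ≤ wmax) : |(a + b) / 2| ≤ wmax := by
  rw [abs_div, abs_two]
  linarith [abs_add_le a b]

lemma abs_half_add_mul_le {a b c : ℝ} (ha : |a| ≤ wmax) (hb : |b| ≤ wmax) (hc : |c| ≤ 1) :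
    |(a + b) / 2 * c| ≤ wmax := by
  rw [abs_mul]
  simpa using mul_le_mul (abs_half_add_le ha hb) hc (abs_nonneg c) ((abs_nonneg a).trans ha)

lemma abs_sub_div_two_mul_le {a b : ℝ} (ha : |a| ≤ wmax) (hb : |b| ≤ wmax) :
    |(b - a) / (2 * ρ)| ≤ wmax / |ρ| := by
  rw [abs_div, abs_mul, abs_two, ← div_div]
  gcongr
  linarith [abs_sub b a]

lemma intervalIntegrable_half_add_mul {l r c : ℝ → ℝ} (hl : Measurable l) (hr : Measurable r)
    (hc : Measurable c) (hlb : ∀ s, |l s| ≤ wmax) (hrb : ∀ s, |r s| ≤ wmax)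
    (hcb : ∀ s, |c s| ≤ 1) (a b : ℝ) :
    IntervalIntegrable (fun s => (l s + r s) / 2 * c s) volume a b :=
  intervalIntegrable_of_abs_le (by fun_prop)
    (fun s => abs_half_add_mul_le (hlb s) (hrb s) (hcb s)) a b

lemma continuous_of_eq_heading {l r θ : ℝ → ℝ} (hl : Measurable l) (hr : Measurable r)
    (hlb : ∀ s, |l s| ≤ wmax) (hrb : ∀ s, |r s| ≤ wmax)
    (hθ : ∀ t, θ t = θ 0 + ∫ s in (0:ℝ)..t, (r s - l s) / (2 * ρ)) : Continuous θ :=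
  continuous_of_eq_primitive (by fun_prop) (fun s => abs_sub_div_two_mul_le (hlb s) (hrb s)) hθ

lemma isDDTraj_glue {x₁ y₁ θ₁ x₂ y₂ θ₂ : ℝ → ℝ} {T : ℝ} (h₁ : IsDDTraj wmax ρ x₁ y₁ θ₁)
    (h₂ : IsDDTraj wmax ρ x₂ y₂ θ₂) (hT : 0 ≤ T)
    (hx : x₂ 0 = x₁ T) (hy : y₂ 0 = y₁ T) (hθ : θ₂ 0 = θ₁ T) :
    IsDDTraj wmax ρ (glue T x₁ x₂) (glue T y₁ y₂) (glue T θ₁ θ₂) := by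
  obtain ⟨l₁, r₁, hl₁, hr₁, hl₁b, hr₁b, hx₁, hy₁, hθ₁⟩ := h₁
  obtain ⟨l₂, r₂, hl₂, hr₂, hl₂b, hr₂b, hx₂, hy₂, hθ₂⟩ := h₂
  have hΘ : Measurable (glue T θ₁ θ₂) :=
    (continuous_of_eq_heading hl₁ hr₁ hl₁b hr₁b hθ₁).measurable.glue
      (continuous_of_eq_heading hl₂ hr₂ hl₂b hr₂b hθ₂).measurable
  have hL := hl₁.glue hl₂ (T := T)
  have hR := hr₁.glue hr₂ (T := T)
  have hLb := abs_glue_le hl₁b hl₂b (T := T)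
  have hRb := abs_glue_le hr₁b hr₂b (T := T)
  have h_comp : ∀ {F₁ F₂ : ℝ → ℝ} (φ : ℝ → ℝ → ℝ → ℝ),
      (∀ a b, IntervalIntegrable
        (fun s => φ (glue T l₁ l₂ s) (glue T r₁ r₂ s) (glue T θ₁ θ₂ s)) volume a b) →
      (∀ t, F₁ t = F₁ 0 + ∫ s in (0:ℝ)..t, φ (l₁ s) (r₁ s) (θ₁ s)) →
      (∀ t, F₂ t = F₂ 0 + ∫ s in (0:ℝ)..t, φ (l₂ s) (r₂ s) (θ₂ s)) → F₂ 0 = F₁ T →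
      ∀ t, glue T F₁ F₂ t = glue T F₁ F₂ 0 +
        ∫ s in (0:ℝ)..t, φ (glue T l₁ l₂ s) (glue T r₁ r₂ s) (glue T θ₁ θ₂ s) := by
    intro F₁ F₂ φ hint hF₁ hF₂ hF t
    rw [glue_comp₃ φ] at hint ⊢
    rw [glue_of_le hT]
    exact glue_eq_primitive hT hint hF₁ hF₂ hF t
  refine ⟨glue T l₁ l₂, glue T r₁ r₂, hL, hR, hLb, hRb,
    h_comp (fun a b c => (a + b) / 2 * cos c) ?_ hx₁ hx₂ hx,
    h_comp (fun a b c => (a + b) / 2 * sin c) ?_ hy₁ hy₂ hy,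
    h_comp (fun a b _ => (b - a) / (2 * ρ)) ?_ hθ₁ hθ₂ hθ⟩
  · exact intervalIntegrable_half_add_mul hL hR (by fun_prop) hLb hRb fun s => abs_cos_le_one _
  · exact intervalIntegrable_half_add_mul hL hR (by fun_prop) hLb hRb fun s => abs_sin_le_one _
  · exact intervalIntegrable_of_abs_le (by fun_prop) fun s => abs_sub_div_two_mul_le (hLb s) (hRb s)

end Trajectory

section Steering

open Complex

variable {wmax ρ : ℝ}

/-- Positions in the plane are encoded as complex numbers, so that driving a distance `ℓ` with
heading `θ` is the translation by `ℓ * exp (θ * I)`. -/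
def DDSteers (wmax ρ : ℝ) (z₀ : ℂ) (θ₀ : ℝ) (z₁ : ℂ) (θ₁ T : ℝ) : Prop :=
  0 ≤ T ∧ ∃ x y θ : ℝ → ℝ, IsDDTraj wmax ρ x y θ ∧
    x 0 = z₀.re ∧ y 0 = z₀.im ∧ θ 0 = θ₀ ∧ x T = z₁.re ∧ y T = z₁.im ∧ θ T = θ₁

lemma exists_abs_le_mul_eq {w : ℝ} (hw : 0 < w) (ℓ : ℝ) : ∃ v, |v| ≤ w ∧ v * (|ℓ| / w) = ℓ := by
  rcases eq_or_ne ℓ 0 with rfl | hℓ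
  · exact ⟨0, by simpa using hw.le, by simp⟩
  refine ⟨ℓ / (|ℓ| / w), ?_, div_mul_cancel₀ _ (by positivity)⟩
  rw [abs_div, abs_div, abs_abs, abs_of_pos hw, div_div_eq_mul_div,
    mul_div_cancel_left₀ _ (abs_ne_zero.2 hℓ)]

lemma norm_integral_add_integral_mul_I_le {f g : ℝ → ℝ} {C T : ℝ} (hT : 0 ≤ T)
    (hf : IntervalIntegrable f volume 0 T) (hg : IntervalIntegrable g volume 0 T)
    (hC : ∀ s, ‖(f s : ℂ) + g s * I‖ ≤ C) :
    ‖((∫ s in (0:ℝ)..T, f s : ℝ) : ℂ) + (∫ s in (0:ℝ)..T, g s : ℝ) * I‖ ≤ C * T := by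
  have hf' : IntervalIntegrable (fun s => (f s : ℂ)) volume 0 T := ⟨hf.1.ofReal, hf.2.ofReal⟩
  have hg' : IntervalIntegrable (fun s => (g s : ℂ)) volume 0 T := ⟨hg.1.ofReal, hg.2.ofReal⟩
  rw [← intervalIntegral.integral_ofReal, ← intervalIntegral.integral_ofReal,
    ← intervalIntegral.integral_mul_const, ← intervalIntegral.integral_add hf' (hg'.mul_const I)]
  refine (intervalIntegral.norm_integral_le_of_norm_le_const fun s _ => hC s).trans_eq ?_
  rw [sub_zero, abs_of_nonneg hT]

lemma norm_mul_exp_neg_mul_I (w : ℂ) (θ : ℝ) : ‖w * exp (-θ * I)‖ = ‖w‖ := by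
  rw [norm_mul, ← ofReal_neg, norm_exp_ofReal_mul_I, mul_one]

namespace DDSteers

variable {z₀ z₁ z₂ : ℂ} {θ₀ θ₁ θ₂ T S : ℝ}

lemma trans (h₁ : DDSteers wmax ρ z₀ θ₀ z₁ θ₁ T) (h₂ : DDSteers wmax ρ z₁ θ₁ z₂ θ₂ S) :
    DDSteers wmax ρ z₀ θ₀ z₂ θ₂ (T + S) := by
  obtain ⟨hT, x₁, y₁, φ₁, h₁, hx₁0, hy₁0, hφ₁0, hx₁T, hy₁T, hφ₁T⟩ := h₁
  obtain ⟨hS, x₂, y₂, φ₂, h₂, hx₂0, hy₂0, hφ₂0, hx₂S, hy₂S, hφ₂S⟩ := h₂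
  have hx := hx₂0.trans hx₁T.symm
  have hy := hy₂0.trans hy₁T.symm
  have hφ := hφ₂0.trans hφ₁T.symm
  have hTS : T ≤ T + S := le_add_of_nonneg_right hS
  refine ⟨add_nonneg hT hS, _, _, _, isDDTraj_glue h₁ h₂ hT hx hy hφ, ?_, ?_, ?_, ?_, ?_, ?_⟩
  · rwa [glue_of_le hT]
  · rwa [glue_of_le hT]
  · rwa [glue_of_le hT]
  · rwa [glue_of_ge hx hTS, add_sub_cancel_left]
  · rwa [glue_of_ge hy hTS, add_sub_cancel_left]
  · rwa [glue_of_ge hφ hTS, add_sub_cancel_left]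

lemma straight {v : ℝ} (hv : |v| ≤ wmax) (hT : 0 ≤ T) (z : ℂ) (θ : ℝ) :
    DDSteers wmax ρ z θ (z + (v * T : ℝ) * exp (θ * I)) θ T := by
  refine ⟨hT, fun t => z.re + v * t * Real.cos θ, fun t => z.im + v * t * Real.sin θ,
    fun _ => θ, ⟨fun _ => v, fun _ => v, measurable_const, measurable_const,
      fun _ => hv, fun _ => hv, fun t => ?_, fun t => ?_, fun t => ?_⟩,
    ?_, ?_, rfl, ?_, ?_, rfl⟩ <;>
  simp [exp_ofReal_mul_I_re, exp_ofReal_mul_I_im, mul_assoc]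

lemma spin {ω : ℝ} (hω : |ω| ≤ wmax) (hT : 0 ≤ T) (z : ℂ) (θ : ℝ) :
    DDSteers wmax ρ z θ z (θ + ω / ρ * T) T := by
  refine ⟨hT, fun _ => z.re, fun _ => z.im, fun t => θ + ω / ρ * t,
    ⟨fun _ => -ω, fun _ => ω, measurable_const, measurable_const,
      fun _ => by rwa [abs_neg], fun _ => hω, fun t => ?_, fun t => ?_, fun t => ?_⟩,
    rfl, rfl, by simp, rfl, rfl, rfl⟩
  · simp
  · simp
  · rw [intervalIntegral.integral_const, smul_eq_mul]
    ring

lemma drive (hw : 0 < wmax) (z : ℂ) (θ ℓ : ℝ) :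
    DDSteers wmax ρ z θ (z + ℓ * exp (θ * I)) θ (|ℓ| / wmax) := by
  obtain ⟨v, hv, hvℓ⟩ := exists_abs_le_mul_eq hw ℓ
  have h := straight (ρ := ρ) hv (T := |ℓ| / wmax) (by positivity) z θ
  rwa [hvℓ] at h

lemma rotate (hw : 0 < wmax) (hρ : 0 < ρ) (z : ℂ) (θ β : ℝ) :
    DDSteers wmax ρ z θ z (θ + β) (ρ * (|β| / wmax)) := by
  obtain ⟨ω, hω, hωβ⟩ := exists_abs_le_mul_eq hw β
  have h := spin (ρ := ρ) hω (T := ρ * (|β| / wmax)) (by positivity) z θ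
  rwa [div_mul_eq_mul_div, mul_left_comm, mul_div_cancel_left₀ _ hρ.ne', hωβ] at h

lemma norm_sub_le (h : DDSteers wmax ρ z₀ θ₀ z₁ θ₁ T) : ‖z₁ - z₀‖ ≤ wmax * T := by
  obtain ⟨hT, x, y, θ, ⟨l, r, hl, hr, hlb, hrb, hx, hy, hθ⟩, hx0, hy0, -, hxT, hyT, -⟩ := h
  have hθc := continuous_of_eq_heading hl hr hlb hrb hθ
  have hre : (z₁ - z₀).re = ∫ s in (0:ℝ)..T, (l s + r s) / 2 * Real.cos (θ s) := by
    rw [sub_re, ← hxT, ← hx0, hx T, add_sub_cancel_left]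
  have him : (z₁ - z₀).im = ∫ s in (0:ℝ)..T, (l s + r s) / 2 * Real.sin (θ s) := by
    rw [sub_im, ← hyT, ← hy0, hy T, add_sub_cancel_left]
  rw [← re_add_im (z₁ - z₀), hre, him]
  refine norm_integral_add_integral_mul_I_le hT
    (intervalIntegrable_half_add_mul hl hr (by fun_prop) hlb hrb (fun s => abs_cos_le_one _) 0 T)
    (intervalIntegrable_half_add_mul hl hr (by fun_prop) hlb hrb (fun s => abs_sin_le_one _) 0 T)
    fun s => ?_
  rw [norm_add_mul_I, mul_pow, mul_pow, ← mul_add, Real.cos_sq_add_sin_sq, mul_one,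
    Real.sqrt_sq_eq_abs]
  exact abs_half_add_le (hlb s) (hrb s)

lemma exists_le_norm_div_add (hw : 0 < wmax) (hρ : 0 < ρ) (z : ℂ) (θ : ℝ) (z' : ℂ) :
    ∃ θ' T, DDSteers wmax ρ z θ z' θ' T ∧ T ≤ ‖z' - z‖ / wmax + π * ρ / (2 * wmax) := by
  set u := (z' - z) * exp (-θ * I)
  -- `u` is the displacement seen from the robot; driving backwards (`σ = -1`) when `u.re < 0`
  -- keeps the turn `arg (σ * u)` within `± π / 2`
  obtain ⟨σ, hσ, hre⟩ : ∃ σ : ℝ, |σ| = 1 ∧ 0 ≤ (σ * u).re := by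
    rcases le_total 0 u.re with h | h
    · exact ⟨1, by simp, by simpa⟩
    · exact ⟨-1, by simp, by simpa⟩
  set v := σ * u
  have hend : z + (σ * ‖v‖ : ℝ) * exp (↑(θ + v.arg) * I) = z' := by
    have hv := norm_mul_exp_arg_mul_I v
    have hθ : exp (θ * I) * exp (-θ * I) = 1 := by rw [← Complex.exp_add]; simp
    have hσ2 : (σ : ℂ) ^ 2 = 1 := by exact_mod_cast (sq_abs σ).symm.trans (by rw [hσ, one_pow])
    push_cast [add_mul, Complex.exp_add]
    linear_combination (σ * exp (θ * I)) * hv + σ ^ 2 * (z' - z) * hθ + (z' - z) * hσ2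
  refine ⟨_, _, (rotate hw hρ z θ v.arg).trans (hend ▸ drive hw z (θ + v.arg) (σ * ‖v‖)), ?_⟩
  have hv : ‖v‖ = ‖z' - z‖ := by
    rw [norm_mul, norm_real, Real.norm_eq_abs, hσ, one_mul, norm_mul_exp_neg_mul_I]
  have harg : ρ * (|v.arg| / wmax) ≤ ρ * (π / 2 / wmax) := by
    gcongr
    exact abs_arg_le_pi_div_two_iff.2 hre
  rw [abs_mul, hσ, one_mul, abs_norm, hv]
  linarith [show ρ * (π / 2 / wmax) = π * ρ / (2 * wmax) by ring]

/-- After turning by `W` and by `-2 W` the robot drives along `θ + W` and `θ - W`, which span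
the plane. -/
lemma exists_le_of_angle (hw : 0 < wmax) (hρ : 0 < ρ) {W : ℝ} (hW₀ : 0 < W) (hW : W < π / 2)
    (z : ℂ) (θ : ℝ) (z' : ℂ) :
    ∃ θ' T, DDSteers wmax ρ z θ z' θ' T ∧
      T ≤ 3 * ρ * W / wmax + (1 / Real.cos W + 1 / Real.sin W) * ‖z' - z‖ / wmax := by
  have hc : 0 < Real.cos W := Real.cos_pos_of_mem_Ioo ⟨by linarith, hW⟩
  have hs : 0 < Real.sin W := Real.sin_pos_of_pos_of_lt_pi hW₀ (by linarith)
  set u := (z' - z) * exp (-θ * I)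
  set a := u.re / Real.cos W
  set b := u.im / Real.sin W
  have hu : ((a + b) / 2 : ℝ) * exp (W * I) + ((a - b) / 2 : ℝ) * exp (↑(-W) * I) = u := by
    apply Complex.ext <;>
      simp only [add_re, add_im, re_ofReal_mul, im_ofReal_mul, exp_ofReal_mul_I_re,
        exp_ofReal_mul_I_im, Real.cos_neg, Real.sin_neg, a, b] <;>
      field_simp <;> ring
  have hend : z + ((a + b) / 2 : ℝ) * exp (↑(θ + W) * I)
      + ((a - b) / 2 : ℝ) * exp (↑(θ + W + -(2 * W)) * I) = z' := by
    have hθ : exp (θ * I) * exp (-θ * I) = 1 := by rw [← Complex.exp_add]; simp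
    rw [show θ + W + -(2 * W) = θ + -W by ring]
    push_cast [add_mul, Complex.exp_add] at hu ⊢
    linear_combination exp (θ * I) * hu + (z' - z) * hθ
  refine ⟨_, _, (((rotate hw hρ z θ W).trans (drive hw z (θ + W) ((a + b) / 2))).trans
    (rotate hw hρ _ _ (-(2 * W)))).trans (hend ▸ drive hw _ _ ((a - b) / 2)), ?_⟩
  have hab : |(a + b) / 2| + |(a - b) / 2| ≤ (1 / Real.cos W + 1 / Real.sin W) * ‖z' - z‖ := by
    have hu : ‖u‖ = ‖z' - z‖ := norm_mul_exp_neg_mul_I _ _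
    have hsum : |(a + b) / 2| + |(a - b) / 2| ≤ |a| + |b| := by
      rw [abs_div, abs_div, abs_two]
      linarith [abs_add_le a b, abs_sub a b]
    have ha : |a| ≤ ‖u‖ / Real.cos W := by
      rw [abs_div, abs_of_pos hc]; gcongr; exact abs_re_le_norm u
    have hb : |b| ≤ ‖u‖ / Real.sin W := by
      rw [abs_div, abs_of_pos hs]; gcongr; exact abs_im_le_norm u
    rw [← hu]
    linarith [show (1 / Real.cos W + 1 / Real.sin W) * ‖u‖ = ‖u‖ / Real.cos W + ‖u‖ / Real.sin W
      by ring]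
  rw [abs_of_pos hW₀, abs_neg, abs_mul, abs_two, abs_of_pos hW₀]
  calc _ = 3 * ρ * W / wmax + (|(a + b) / 2| + |(a - b) / 2|) / wmax := by ring
    _ ≤ _ := by gcongr

lemma exists_pos_forall_steers_lt (hw : 0 < wmax) (hρ : 0 < ρ) {ε : ℝ} (hε : 0 < ε) :
    ∃ δ > 0, ∀ z θ z', ‖z' - z‖ < δ → ∃ θ' T, DDSteers wmax ρ z θ z' θ' T ∧ T < ε := by
  set W := min (π / 4) (ε * wmax / (6 * ρ))
  have hW₀ : 0 < W := lt_min (by positivity) (by positivity)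
  have hW : W < π / 2 := (min_le_left _ _).trans_lt (by linarith [pi_pos])
  set K := 1 / Real.cos W + 1 / Real.sin W
  have hK : 0 < K := by
    have := Real.cos_pos_of_mem_Ioo ⟨by linarith, hW⟩
    have := Real.sin_pos_of_pos_of_lt_pi hW₀ (by linarith)
    positivity
  refine ⟨ε * wmax / (2 * K), by positivity, fun z θ z' hz => ?_⟩
  obtain ⟨θ', T, h, hT⟩ := exists_le_of_angle hw hρ hW₀ hW z θ z'
  refine ⟨θ', T, h, hT.trans_lt ?_⟩
  have h_turn : 3 * ρ * W / wmax ≤ ε / 2 := by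
    rw [div_le_iff₀ hw]
    calc 3 * ρ * W ≤ 3 * ρ * (ε * wmax / (6 * ρ)) := by gcongr; exact min_le_right _ _
      _ = ε / 2 * wmax := by field_simp; ring
  have h_drive : K * ‖z' - z‖ / wmax < ε / 2 := by
    rw [div_lt_iff₀ hw]
    calc K * ‖z' - z‖ < K * (ε * wmax / (2 * K)) := by gcongr
      _ = ε / 2 * wmax := by field_simp
  linarith

end DDSteers

end Steering

section TravelTime

variable {wmax ρ : ℝ}

def Plane.toComplex (p : Plane) : ℂ := ⟨p 0, p 1⟩

lemma Plane.norm_toComplex_sub (p q : Plane) : ‖p.toComplex - q.toComplex‖ = ‖p - q‖ := by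
  rw [Complex.norm_eq_sqrt_sq_add_sq, EuclideanSpace.norm_eq, Fin.sum_univ_two]
  simp [toComplex, sq_abs]

lemma tauDD_eq_sInf (p : Plane) (θ₀ : ℝ) (q : Plane) : tauDD wmax ρ p θ₀ q =
    sInf {T | ∃ θ₁, DDSteers wmax ρ p.toComplex θ₀ q.toComplex θ₁ T} := by
  unfold tauDD DDSteers
  congr 1
  ext T
  constructor
  · rintro ⟨hT, x, y, θ, h, hx0, hy0, hθ0, hxT, hyT⟩
    exact ⟨θ T, hT, x, y, θ, h, hx0, hy0, hθ0, hxT, hyT, rfl⟩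
  · rintro ⟨-, hT, x, y, θ, h, hx0, hy0, hθ0, hxT, hyT, -⟩
    exact ⟨hT, x, y, θ, h, hx0, hy0, hθ0, hxT, hyT⟩

lemma tauDD_le_of_steers {p q : Plane} {θ₀ θ₁ T : ℝ}
    (h : DDSteers wmax ρ p.toComplex θ₀ q.toComplex θ₁ T) :
    tauDD wmax ρ p θ₀ q ≤ T := by
  rw [tauDD_eq_sInf]
  exact csInf_le ⟨0, fun _ ⟨_, hT⟩ => hT.1⟩ ⟨θ₁, h⟩

lemma tauDD_le_norm_div_add (hw : 0 < wmax) (hρ : 0 < ρ) (p : Plane) (θ₀ : ℝ) (q : Plane) :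
    tauDD wmax ρ p θ₀ q ≤ ‖p - q‖ / wmax + π * ρ / (2 * wmax) := by
  obtain ⟨θ₁, T, h, hT⟩ := DDSteers.exists_le_norm_div_add hw hρ p.toComplex θ₀ q.toComplex
  rw [Plane.norm_toComplex_sub, norm_sub_rev] at hT
  exact (tauDD_le_of_steers h).trans hT

lemma norm_div_le_tauDD (hw : 0 < wmax) (hρ : 0 < ρ) (p : Plane) (θ₀ : ℝ) (q : Plane) :
    ‖p - q‖ / wmax ≤ tauDD wmax ρ p θ₀ q := by
  obtain ⟨θ₁, T, h, -⟩ := DDSteers.exists_le_norm_div_add hw hρ p.toComplex θ₀ q.toComplex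
  rw [tauDD_eq_sInf]
  refine le_csInf ⟨T, θ₁, h⟩ fun T ⟨_, h⟩ => div_le_of_le_mul₀ hw.le h.1 ?_
  simpa [Plane.norm_toComplex_sub, norm_sub_rev, mul_comm] using h.norm_sub_le

lemma upperSemicontinuous_tauDD (hw : 0 < wmax) (hρ : 0 < ρ) (p : Plane) (θ₀ : ℝ) :
    UpperSemicontinuous (tauDD wmax ρ p θ₀) := by
  intro q c hc
  obtain ⟨θ₁, T, h, -⟩ := DDSteers.exists_le_norm_div_add hw hρ p.toComplex θ₀ q.toComplex
  rw [tauDD_eq_sInf] at hc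
  obtain ⟨T, ⟨θ₁, hT⟩, hTc⟩ := exists_lt_of_csInf_lt (by exact ⟨T, θ₁, h⟩) hc
  obtain ⟨δ, hδ, hsteer⟩ := DDSteers.exists_pos_forall_steers_lt hw hρ (sub_pos.2 hTc)
  filter_upwards [Metric.ball_mem_nhds q hδ] with q' hq'
  obtain ⟨θ₂, S, hS, hSc⟩ := hsteer q.toComplex θ₁ q'.toComplex
    (by rwa [Plane.norm_toComplex_sub, ← dist_eq_norm])
  calc tauDD wmax ρ p θ₀ q' ≤ T + S := tauDD_le_of_steers (hT.trans hS)
    _ < c := by linarith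

end TravelTime

lemma map_ciInf_le_ciInf_le_map_ciInf_add {ι : Type*} [Finite ι] [Nonempty ι] {φ : ℝ → ℝ}
    (hφ : Monotone φ) {a b : ι → ℝ} {c : ℝ} (hlo : ∀ i, φ (a i) ≤ b i)
    (hhi : ∀ i, b i ≤ φ (a i) + c) :
    φ (⨅ i, a i) ≤ ⨅ i, b i ∧ ⨅ i, b i ≤ φ (⨅ i, a i) + c := by
  refine ⟨le_ciInf fun i => (hφ (ciInf_le (Finite.bddBelow_range a) i)).trans (hlo i), ?_⟩
  obtain ⟨j, hj⟩ := exists_eq_ciInf_of_finite (f := a)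
  exact (ciInf_le (Finite.bddBelow_range b) j).trans (hj ▸ hhi j)

lemma setIntegral_le_and_le_add {α : Type*} [MeasurableSpace α] {μ : Measure α} {s : Set α}
    {f g : α → ℝ} {c : ℝ} (hs : μ s ≠ ⊤) (hf : IntegrableOn f s μ)
    (hg : AEStronglyMeasurable g (μ.restrict s)) (hlo : ∀ x, f x ≤ g x)
    (hhi : ∀ x, g x ≤ f x + c) :
    ∫ x in s, f x ∂μ ≤ ∫ x in s, g x ∂μ ∧ ∫ x in s, g x ∂μ ≤ ∫ x in s, f x ∂μ + c * μ.real s := by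
  have hc : IntegrableOn (fun _ => c) s μ := integrableOn_const hs
  have hgi : IntegrableOn g s μ := by
    refine Integrable.mono' (hf.abs.add hc.abs) hg (Eventually.of_forall fun x => ?_)
    rw [Pi.add_apply, Real.norm_eq_abs, abs_le]
    constructor <;> linarith [hlo x, hhi x, le_abs_self (f x), neg_abs_le (f x), le_abs_self c]
  refine ⟨integral_mono hf hgi hlo, (integral_mono hgi (hf.add hc) hhi).trans_eq ?_⟩
  change ∫ x in s, f x + c ∂μ = _
  rw [integral_add hf hc, setIntegral_const, smul_eq_mul, mul_comm]

lemma integrableOn_ciInf_norm_sub {ι E : Type*} [Finite ι] [Nonempty ι] [NormedAddCommGroup E]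
    [MeasurableSpace E] [OpensMeasurableSpace E] {μ : Measure E} [IsFiniteMeasureOnCompacts μ]
    {K : Set E} (hK : IsCompact K) (p : ι → E) :
    IntegrableOn (fun q => ⨅ i, ‖p i - q‖) K μ := by
  obtain ⟨i⟩ := ‹Nonempty ι›
  have hdist : ∀ i, Continuous fun q => ‖p i - q‖ := fun i => by fun_prop
  refine Integrable.mono' ((hdist i).continuousOn.integrableOn_compact hK)
    (Measurable.iInf fun i => (hdist i).measurable).aestronglyMeasurable
    (Eventually.of_forall fun q => ?_)
  rw [Real.norm_eq_abs, abs_of_nonneg (le_ciInf fun i => norm_nonneg _)]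
  exact ciInf_le (Finite.bddBelow_range _) i

theorem dd_median_stationing_bounds_general
    (wmax ρ A : ℝ) (hw : 0 < wmax) (hρ : 0 < ρ) (hA : 0 < A)
    (Q : Set Plane) (hQc : IsCompact Q)
    (hvol : volume Q = ENNReal.ofReal A)
    (m : ℕ) (hm : 0 < m) (pstar : Fin m → Plane) (θs : Fin m → ℝ) :
    let H : (Fin m → Plane) → ℝ := fun ps => (1 / A) * ∫ q in Q, ⨅ i, ‖ps i - q‖
    let TMS : ℝ := (1 / A) * ∫ q in Q, ⨅ i, tauDD wmax ρ (pstar i) (θs i) q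
    (∀ i, pstar i ∈ Q) →
    (∀ ps : Fin m → Plane, (∀ i, ps i ∈ Q) → H pstar ≤ H ps) →
    H pstar / wmax ≤ TMS ∧ TMS ≤ H pstar / wmax + π * ρ / (2 * wmax) := by
  intro H TMS _ _
  have : Nonempty (Fin m) := ⟨⟨0, hm⟩⟩
  have h_pointwise q := map_ciInf_le_ciInf_le_map_ciInf_add
    (fun _ _ h => div_le_div_of_nonneg_right h hw.le)
    (fun i => norm_div_le_tauDD hw hρ (pstar i) (θs i) q)
    (fun i => tauDD_le_norm_div_add hw hρ (pstar i) (θs i) q)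
  obtain ⟨hlo, hhi⟩ := setIntegral_le_and_le_add (hvol ▸ ENNReal.ofReal_ne_top)
    ((integrableOn_ciInf_norm_sub hQc pstar).div_const wmax)
    (Measurable.iInf fun i => (upperSemicontinuous_tauDD hw hρ _ _).measurable).aestronglyMeasurable
    (fun q => (h_pointwise q).1) (fun q => (h_pointwise q).2)
  rw [integral_div] at hlo hhi
  rw [measureReal_def, hvol, ENNReal.toReal_ofReal hA.le] at hhi
  simp only [H, TMS]
  constructor
  · rw [mul_div_assoc]
    gcongr
  · calc _ ≤ 1 / A * ((∫ q in Q, ⨅ i, ‖pstar i - q‖) / wmax + π * ρ / (2 * wmax) * A) := by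
          gcongr
      _ = _ := by field_simp

/-- bounds on the coverage cost of the Median Stationing algorithm for DD
robots in a compact convex `Q` of area `A`: if `p*` is an `m`-median configuration and
the headings `θᵢ` are arbitrary, then
`H*_m(Q)/w_max ≤ T_MS^DD ≤ H*_m(Q)/w_max + πρ/(2 w_max)`. -/
theorem dd_median_stationing_bounds
    (wmax ρ A : ℝ) (hw : 0 < wmax) (hρ : 0 < ρ) (hA : 0 < A)
    (Q : Set Plane) (hQc : IsCompact Q) (hQconv : Convex ℝ Q)
    (hvol : volume Q = ENNReal.ofReal A)
    (m : ℕ) (hm : 0 < m) (pstar : Fin m → Plane) (θs : Fin m → ℝ) :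
    let H : (Fin m → Plane) → ℝ := fun ps => (1 / A) * ∫ q in Q, ⨅ i, ‖ps i - q‖
    let TMS : ℝ := (1 / A) * ∫ q in Q, ⨅ i, tauDD wmax ρ (pstar i) (θs i) q
    (∀ i, pstar i ∈ Q) →
    (∀ ps : Fin m → Plane, (∀ i, ps i ∈ Q) → H pstar ≤ H ps) →
    H pstar / wmax ≤ TMS ∧ TMS ≤ H pstar / wmax + π * ρ / (2 * wmax) :=
  dd_median_stationing_bounds_general wmax ρ A hw hρ hA Q hQc hvol m hm pstar θs
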